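/- For p odd and s an invertible Niho exponent over L, W_{L,s}(1) ≥ p^n; moreover if p^n ≡ 2 (mod 3) then W_{L,s}(1) ≥ 3p^n. -/

import Mathlib

/-!
Write `q = p^n`, so that `#L = q²`, `F` sits in `L` as the solutions of `x^q = x`, and `a^s = a`
on `F` because `s ≡ 1 mod q - 1`. Hence `x ↦ x^s - x` is `F`-homogeneous, and on each coset
`x₀ Fˣ` of `Fˣ` in `Lˣ`, i.e. on each fibre of `x ↦ x^(q-1)`, the character sum is
`∑_{a ∈ F} μ(a (x₀^s - x₀)) - 1`, which is `q - 1` or `-1` by orthogonality. The `q + 1` cosets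
are indexed by the `(q+1)`-th roots of unity `u`, so `W(1) = q (N - 1)` where `N` counts the
cosets on which `μ(x^s - x)` is identically `1`. On the coset of `u` we have `x^s = x u^k`; if
`u^k ∈ {1, u}` then `x^s - x` is `0` or `x^q - x`, whose trace vanishes. This happens for
`u = ±1`, so `N ≥ 2`, and, when `q ≡ 2 mod 3`, also for the cube roots of unity, because then
`k ≢ 2 mod 3` (otherwise `3` would divide both `s` and `q² - 1`); so `N ≥ 4`.
-/

/-- The Weil sum `W_{F,s}(a) = ∑_{x ∈ F} μ(x^s - a x)`, where `μ` is the canonical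
additive character `μ(x) = ζ_p^{Tr_{F/𝔽_p}(x)}` of the finite field `F`. -/
noncomputable def weilSum (p : ℕ) (F : Type) [Field F] [Fintype F]
    [Algebra (ZMod p) F] (s : ℕ) (a : F) : ℂ :=
  ∑ x : F, Complex.exp (2 * Real.pi * Complex.I *
    ((Algebra.trace (ZMod p) F (x ^ s - a * x)).val : ℂ) / (p : ℂ))

open Finset
open Polynomial (nthRootsFinset mem_nthRootsFinset)

theorem Nat.sq_sub_one_eq_mul (q : ℕ) : q ^ 2 - 1 = (q + 1) * (q - 1) := by
  simpa using Nat.sq_sub_sq q 1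

theorem Nat.mod_three_le_one_of_coprime {q k : ℕ} (hq : q % 3 = 2)
    (hs : Nat.Coprime (1 + k * (q - 1)) (q ^ 2 - 1)) : k % 3 ≤ 1 := by
  by_contra! hk
  have hs3 : 3 ∣ 1 + k * (q - 1) := by
    have hq1 : (q - 1) % 3 = 1 := by omega
    rw [Nat.dvd_iff_mod_eq_zero, Nat.add_mod, Nat.mul_mod, hq1]
    omega
  have hq3 : 3 ∣ q ^ 2 - 1 := by
    rw [Nat.sq_sub_one_eq_mul]
    exact Dvd.dvd.mul_right (by omega) _
  exact absurd (Nat.eq_one_of_dvd_coprimes hs hs3 hq3) (by norm_num)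

theorem pow_eq_one_or_eq_self_of_pow_eq_one {M : Type*} [Monoid M] {u : M} {d k : ℕ}
    (hu : u ^ d = 1) (hk : k % d ≤ 1) : u ^ k = 1 ∨ u ^ k = u := by
  rw [← Nat.div_add_mod k d, pow_add, pow_mul, hu, one_pow, one_mul]
  rcases Nat.le_one_iff_eq_zero_or_eq_one.mp hk with h | h <;> simp [h]

theorem AddChar.sum_algebraMap_mul {K L R : Type*} [CommRing K] [Fintype K] [Semiring L]
    [Algebra K L] [CommRing R] [IsDomain R] [DecidableEq R] (ψ : AddChar L R) (c : L) :
    ∑ a : K, ψ (algebraMap K L a * c) =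
      if ∀ a : K, ψ (algebraMap K L a * c) = 1 then (Fintype.card K : R) else 0 := by
  classical
  have h := (ψ.compAddMonoidHom
    ((AddMonoidHom.mulRight c).comp (algebraMap K L).toAddMonoidHom)).sum_eq_ite
  simpa [AddChar.ext_iff] using h

namespace FiniteField

section

variable {K L : Type*} [Field K] [Fintype K] [Field L] [Finite L] [Algebra K L]

theorem mem_range_algebraMap_iff_pow_card (x : L) :
    x ∈ Set.range (algebraMap K L) ↔ x ^ Fintype.card K = x := by
  refine ⟨?_, fun hx => (IsGalois.mem_range_algebraMap_iff_fixed x).mpr fun f => ?_⟩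
  · rintro ⟨a, rfl⟩
    rw [← map_pow, pow_card]
  · obtain ⟨i, rfl⟩ := (bijective_frobeniusAlgEquivOfAlgebraic_pow K L).2 f
    rw [AlgEquiv.coe_pow, coe_frobeniusAlgEquivOfAlgebraic]
    exact Function.iterate_fixed hx _

theorem pow_one_add_mul_card_sub_one (a : K) (k : ℕ) :
    a ^ (1 + k * (Fintype.card K - 1)) = a := by
  rcases eq_or_ne a 0 with rfl | ha
  · simp
  · rw [pow_add, pow_one, pow_mul', pow_card_sub_one_eq_one a ha, one_pow, mul_one]

theorem trace_pow_char_pow (p : ℕ) [Fact p.Prime] [Algebra (ZMod p) L] (n : ℕ) (y : L) :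
    Algebra.trace (ZMod p) L (y ^ p ^ n) = Algebra.trace (ZMod p) L y := by
  have h := Algebra.trace_eq_of_algEquiv (frobeniusAlgEquivOfAlgebraic (ZMod p) L ^ n) y
  rwa [AlgEquiv.coe_pow, coe_frobeniusAlgEquivOfAlgebraic_iterate, ZMod.card] at h

end

theorem card_nthRootsFinset_of_prime_dvd {L : Type*} [Field L] [Fintype L] {d : ℕ}
    [Fact d.Prime] (hd : d ∣ Fintype.card L - 1) : #(nthRootsFinset d (1 : L)) = d := by
  classical
  rw [← Fintype.card_units] at hd
  obtain ⟨ζ, hζ⟩ := exists_prime_orderOf_dvd_card d hd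
  have h := (IsPrimitiveRoot.orderOf (ζ : L)).card_nthRootsFinset
  rwa [orderOf_units, hζ] at h

theorem four_le_card_nthRootsFinset_two_union_three {L : Type*} [Field L] [Fintype L]
    [DecidableEq L] (h2 : 2 ∣ Fintype.card L - 1) (h3 : 3 ∣ Fintype.card L - 1) :
    4 ≤ #(nthRootsFinset 2 (1 : L) ∪ nthRootsFinset 3 1) := by
  have hinter : nthRootsFinset 2 (1 : L) ∩ nthRootsFinset 3 1 ⊆ {1} := fun u hu => by
    simp only [mem_inter, mem_nthRootsFinset two_pos, mem_nthRootsFinset three_pos] at hu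
    rw [mem_singleton]
    linear_combination hu.2 - u * hu.1
  have hunion := card_union_add_card_inter (nthRootsFinset 2 (1 : L)) (nthRootsFinset 3 1)
  have hinter_card := card_le_card hinter
  rw [card_nthRootsFinset_of_prime_dvd h2, card_nthRootsFinset_of_prime_dvd h3] at hunion
  rw [card_singleton] at hinter_card
  omega

end FiniteField

section PowFiber

variable (K : Type*) {L : Type*} [Field K] [Fintype K] [Field L] [Fintype L] [DecidableEq L]

def powFiber (u : L) : Finset L := {x ∈ univ.erase 0 | x ^ (Fintype.card K - 1) = u}

variable {R : Type*} [CommRing R] [DecidableEq R]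

noncomputable def trivialFibers (ψ : AddChar L R) (s : ℕ) : Finset L :=
  {u ∈ nthRootsFinset (Fintype.card K + 1) (1 : L) | ∀ x ∈ powFiber K u, ψ (x ^ s - x) = 1}

theorem nthRootsFinset_subset_trivialFibers {ψ : AddChar L R}
    (hψ : ∀ y : L, ψ (y ^ Fintype.card K - y) = 1) {d k : ℕ} (hd : d ∣ Fintype.card K + 1)
    (hk : k % d ≤ 1) :
    nthRootsFinset d (1 : L) ⊆ trivialFibers K ψ (1 + k * (Fintype.card K - 1)) := by
  intro u hu
  have hd0 : 0 < d := Nat.pos_of_dvd_of_pos hd (Nat.succ_pos _)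
  rw [mem_nthRootsFinset hd0] at hu
  obtain ⟨c, hc⟩ := hd
  refine mem_filter.mpr ⟨?_, fun x hx => ?_⟩
  · rw [mem_nthRootsFinset (Nat.add_one_pos _), hc, pow_mul, hu, one_pow]
  obtain ⟨-, rfl⟩ := mem_filter.mp hx
  have hq : Fintype.card K - 1 + 1 = Fintype.card K := Nat.sub_add_cancel Fintype.card_pos
  rw [pow_add, pow_one, pow_mul']
  rcases pow_eq_one_or_eq_self_of_pow_eq_one hu hk with h | h
  · rw [h, mul_one, sub_self, AddChar.map_zero_eq_one]
  · rw [h, ← pow_succ', hq, hψ]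

omit [Field K] [Field L] [DecidableEq L] in
theorem dvd_card_sub_one_of_dvd_card_add_one (hL : Fintype.card L = Fintype.card K ^ 2) {d : ℕ}
    (hd : d ∣ Fintype.card K + 1) : d ∣ Fintype.card L - 1 := by
  rw [hL, Nat.sq_sub_one_eq_mul]
  exact hd.mul_right _

theorem two_le_card_trivialFibers (hL : Fintype.card L = Fintype.card K ^ 2) {ψ : AddChar L R}
    (hψ : ∀ y : L, ψ (y ^ Fintype.card K - y) = 1) (hodd : Odd (Fintype.card K)) (k : ℕ) :
    2 ≤ #(trivialFibers K ψ (1 + k * (Fintype.card K - 1))) := by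
  have h2 : 2 ∣ Fintype.card K + 1 := even_iff_two_dvd.mp hodd.add_one
  calc 2 = #(nthRootsFinset 2 (1 : L)) :=
        (FiniteField.card_nthRootsFinset_of_prime_dvd
          (dvd_card_sub_one_of_dvd_card_add_one K hL h2)).symm
    _ ≤ _ := card_le_card <| nthRootsFinset_subset_trivialFibers K hψ h2 <|
        Nat.le_of_lt_succ (Nat.mod_lt k two_pos)

theorem four_le_card_trivialFibers (hL : Fintype.card L = Fintype.card K ^ 2) {ψ : AddChar L R}
    (hψ : ∀ y : L, ψ (y ^ Fintype.card K - y) = 1) (hodd : Odd (Fintype.card K)) {k : ℕ}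
    (hq : Fintype.card K % 3 = 2)
    (hs : Nat.Coprime (1 + k * (Fintype.card K - 1)) (Fintype.card K ^ 2 - 1)) :
    4 ≤ #(trivialFibers K ψ (1 + k * (Fintype.card K - 1))) := by
  have h2 : 2 ∣ Fintype.card K + 1 := even_iff_two_dvd.mp hodd.add_one
  have h3 : 3 ∣ Fintype.card K + 1 := by omega
  refine (FiniteField.four_le_card_nthRootsFinset_two_union_three
    (dvd_card_sub_one_of_dvd_card_add_one K hL h2)
    (dvd_card_sub_one_of_dvd_card_add_one K hL h3)).trans (card_le_card (union_subset ?_ ?_))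
  · exact nthRootsFinset_subset_trivialFibers K hψ h2 (Nat.le_of_lt_succ (Nat.mod_lt k two_pos))
  · exact nthRootsFinset_subset_trivialFibers K hψ h3 (Nat.mod_three_le_one_of_coprime hq hs)

variable [Algebra K L] [DecidableEq K]

theorem powFiber_eq_map {x₀ : L} (hx₀ : x₀ ≠ 0) :
    powFiber K (x₀ ^ (Fintype.card K - 1)) = (univ.erase (0 : K)).map
      ⟨fun a => algebraMap K L a * x₀,
        (mul_left_injective₀ hx₀).comp (algebraMap K L).injective⟩ := by
  have hq : Fintype.card K - 1 + 1 = Fintype.card K := Nat.sub_add_cancel Fintype.card_pos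
  ext x
  simp only [powFiber, mem_filter, mem_erase, mem_univ, and_true, mem_map,
    Function.Embedding.coeFn_mk]
  constructor
  · rintro ⟨hx, hxq⟩
    have hfix : (x / x₀) ^ Fintype.card K = x / x₀ := by
      rw [← hq, pow_succ, div_pow, hxq, div_self (pow_ne_zero _ hx₀), one_mul]
    obtain ⟨a, ha⟩ := (FiniteField.mem_range_algebraMap_iff_pow_card _).mpr hfix
    refine ⟨a, ?_, by rw [ha, div_mul_cancel₀ x hx₀]⟩
    rintro rfl
    rw [map_zero, eq_comm, div_eq_zero_iff] at ha
    exact ha.elim hx hx₀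
  · rintro ⟨a, ha, rfl⟩
    refine ⟨mul_ne_zero ((map_ne_zero _).mpr ha) hx₀, ?_⟩
    rw [mul_pow, ← map_pow, FiniteField.pow_card_sub_one_eq_one a ha, map_one, one_mul]

theorem card_image_pow_card_sub_one (hL : Fintype.card L = Fintype.card K ^ 2) :
    #((univ.erase (0 : L)).image (· ^ (Fintype.card K - 1))) = Fintype.card K + 1 := by
  set q := Fintype.card K
  have hq : 1 < q := Fintype.one_lt_card
  have hfibers : ∀ u ∈ (univ.erase (0 : L)).image (· ^ (q - 1)),
      #{x ∈ univ.erase 0 | x ^ (q - 1) = u} = q - 1 := by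
    intro u hu
    obtain ⟨x₀, hx₀, rfl⟩ := mem_image.mp hu
    rw [← powFiber, powFiber_eq_map K (ne_of_mem_erase hx₀), card_map,
      card_erase_of_mem (mem_univ _), card_univ]
  have hcount := card_eq_sum_card_fiberwise (f := (· ^ (q - 1))) (s := univ.erase (0 : L))
    (fun x hx => mem_image_of_mem _ hx)
  rw [sum_congr rfl hfibers, sum_const, smul_eq_mul, card_erase_of_mem (mem_univ _), card_univ,
    hL, Nat.sq_sub_one_eq_mul] at hcount
  exact (Nat.eq_of_mul_eq_mul_right (by omega) hcount).symm

theorem image_pow_card_sub_one_eq_nthRootsFinset (hL : Fintype.card L = Fintype.card K ^ 2) :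
    (univ.erase (0 : L)).image (· ^ (Fintype.card K - 1)) =
      nthRootsFinset (Fintype.card K + 1) (1 : L) := by
  refine eq_of_subset_of_card_le (fun u hu => ?_) ?_
  · obtain ⟨x, hx, rfl⟩ := mem_image.mp hu
    rw [mem_nthRootsFinset (Nat.succ_pos _), ← pow_mul, mul_comm, ← Nat.sq_sub_one_eq_mul, ← hL]
    exact FiniteField.pow_card_sub_one_eq_one x (ne_of_mem_erase hx)
  · rw [card_image_pow_card_sub_one K hL, Polynomial.nthRootsFinset_def]
    exact (Multiset.toFinset_card_le _).trans (Polynomial.card_nthRoots _ _)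

variable [IsDomain R]

theorem sum_powFiber_addChar {s : ℕ} (hs : ∀ a : K, a ^ s = a) (ψ : AddChar L R) {x₀ : L}
    (hx₀ : x₀ ≠ 0) :
    ∑ x ∈ powFiber K (x₀ ^ (Fintype.card K - 1)), ψ (x ^ s - x) =
      (if ∀ x ∈ powFiber K (x₀ ^ (Fintype.card K - 1)), ψ (x ^ s - x) = 1
        then (Fintype.card K : R) else 0) - 1 := by
  have hhom (a : K) : (algebraMap K L a * x₀) ^ s - algebraMap K L a * x₀ =
      algebraMap K L a * (x₀ ^ s - x₀) := by
    rw [mul_pow, ← map_pow, hs, mul_sub]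
  have hall : (∀ x ∈ powFiber K (x₀ ^ (Fintype.card K - 1)), ψ (x ^ s - x) = 1) ↔
      ∀ a : K, ψ (algebraMap K L a * (x₀ ^ s - x₀)) = 1 := by
    simp only [powFiber_eq_map K hx₀, forall_mem_map, mem_erase, mem_univ, and_true,
      Function.Embedding.coeFn_mk, hhom]
    refine ⟨fun h a => ?_, fun h a _ => h a⟩
    rcases eq_or_ne a 0 with rfl | ha
    · rw [map_zero, zero_mul, AddChar.map_zero_eq_one]
    · exact h a ha
  rw [if_congr hall rfl rfl, ← AddChar.sum_algebraMap_mul, ← add_sum_erase _ _ (mem_univ 0),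
    map_zero, zero_mul, AddChar.map_zero_eq_one, add_sub_cancel_left, powFiber_eq_map K hx₀,
    sum_map]
  exact sum_congr rfl fun a _ => congrArg ψ (hhom a)

theorem sum_addChar_pow_sub_self_eq {s : ℕ} (hs : ∀ a : K, a ^ s = a) (ψ : AddChar L R) :
    ∑ x : L, ψ (x ^ s - x) = 1 + ∑ u ∈ (univ.erase (0 : L)).image (· ^ (Fintype.card K - 1)),
      ((if ∀ x ∈ powFiber K u, ψ (x ^ s - x) = 1 then (Fintype.card K : R) else 0) - 1) := by
  have hs0 : s ≠ 0 := by
    rintro rfl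
    simpa using hs 0
  rw [← add_sum_erase _ _ (mem_univ 0), zero_pow hs0, sub_zero, AddChar.map_zero_eq_one,
    ← sum_fiberwise_of_maps_to (g := (· ^ (Fintype.card K - 1)))
      (fun x hx => mem_image_of_mem _ hx)]
  congr 1
  refine sum_congr rfl fun u hu => ?_
  obtain ⟨x₀, hx₀, rfl⟩ := mem_image.mp hu
  exact sum_powFiber_addChar K hs ψ (ne_of_mem_erase hx₀)

theorem sum_addChar_pow_sub_self_eq_mul (hL : Fintype.card L = Fintype.card K ^ 2) {s : ℕ}
    (hs : ∀ a : K, a ^ s = a) (ψ : AddChar L R) :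
    ∑ x : L, ψ (x ^ s - x) = Fintype.card K * ((#(trivialFibers K ψ s) : R) - 1) := by
  rw [trivialFibers, sum_addChar_pow_sub_self_eq K hs, sum_sub_distrib, sum_ite, sum_const_zero,
    add_zero, sum_const, sum_const, card_image_pow_card_sub_one K hL,
    image_pow_card_sub_one_eq_nthRootsFinset K hL]
  ring

end PowFiber

section TraceChar

variable (p : ℕ) [Fact p.Prime] (L : Type) [Field L] [Fintype L] [Algebra (ZMod p) L]

noncomputable def traceAddChar : AddChar L ℂ :=
  ZMod.stdAddChar.compAddMonoidHom (Algebra.trace (ZMod p) L).toAddMonoidHom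

theorem weilSum_one_eq_sum_traceAddChar (s : ℕ) :
    weilSum p L s 1 = ∑ x : L, traceAddChar p L (x ^ s - x) := by
  refine sum_congr rfl fun x _ => ?_
  rw [traceAddChar, AddChar.compAddMonoidHom_apply, ZMod.stdAddChar_apply, ZMod.toCircle_apply,
    one_mul]
  rfl

theorem traceAddChar_pow_sub_self (n : ℕ) (y : L) :
    traceAddChar p L (y ^ p ^ n - y) = 1 := by
  rw [traceAddChar, AddChar.compAddMonoidHom_apply, LinearMap.toAddMonoidHom_coe, map_sub,
    FiniteField.trace_pow_char_pow, sub_self, AddChar.map_zero_eq_one]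

end TraceChar

theorem weil_sum_at_one_lower_bound_general (p n : ℕ) [Fact p.Prime]
    (F L : Type) [Field F] [Fintype F] [Field L] [Fintype L]
    [Algebra (ZMod p) L] [Algebra F L]
    (hF : Fintype.card F = p ^ n) (hL : Fintype.card L = p ^ (2 * n))
    (k s : ℕ) (hsk : s = 1 + k * (p ^ n - 1)) (hs : Nat.Coprime s (p ^ (2 * n) - 1))
    (hp : Odd p) :
    ∃ m : ℤ, weilSum p L s 1 = (m : ℂ) ∧ (p : ℤ) ^ n ≤ m ∧
      (p ^ n % 3 = 2 → 3 * (p : ℤ) ^ n ≤ m) := by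
  classical
  have hψ : ∀ y : L, traceAddChar p L (y ^ Fintype.card F - y) = 1 := by
    rw [hF]; exact traceAddChar_pow_sub_self p L n
  have hLF : Fintype.card L = Fintype.card F ^ 2 := by rw [hL, hF, ← pow_mul, mul_comm]
  have hodd : Odd (Fintype.card F) := hF ▸ hp.pow
  have hq : (p : ℤ) ^ n = Fintype.card F := by rw [hF, Nat.cast_pow]
  rw [← hL, hLF] at hs
  rw [← hF] at hsk ⊢
  rw [hq]
  subst hsk
  set q := Fintype.card F
  set N := #(trivialFibers F (traceAddChar p L) (1 + k * (q - 1)))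
  refine ⟨q * (N - 1), ?_, ?_, fun h3 => ?_⟩
  · rw [weilSum_one_eq_sum_traceAddChar, sum_addChar_pow_sub_self_eq_mul F hLF
      (fun a => FiniteField.pow_one_add_mul_card_sub_one a k)]
    push_cast
    ring
  · nlinarith [two_le_card_trivialFibers F hLF hψ hodd k]
  · nlinarith [four_le_card_trivialFibers F hLF hψ hodd h3 hs]

/-- for `p` odd and `s` an invertible Niho exponent over `L`,
`W_{L,s}(1) ≥ p^n`; moreover if `p^n ≡ 2 (mod 3)` then `W_{L,s}(1) ≥ 3p^n`. -/
theorem weil_sum_at_one_lower_bound (p n : ℕ) [Fact p.Prime] (hn : 0 < n)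
    (F L : Type) [Field F] [Fintype F] [Field L] [Fintype L]
    [Algebra (ZMod p) L] [Algebra F L]
    (hF : Fintype.card F = p ^ n) (hL : Fintype.card L = p ^ (2 * n))
    (k s : ℕ) (hsk : s = 1 + k * (p ^ n - 1)) (hs : Nat.Coprime s (p ^ (2 * n) - 1))
    (hp : Odd p) :
    ∃ m : ℤ, weilSum p L s 1 = (m : ℂ) ∧ (p : ℤ) ^ n ≤ m ∧
      (p ^ n % 3 = 2 → 3 * (p : ℤ) ^ n ≤ m) :=
  weil_sum_at_one_lower_bound_general p n F L hF hL k s hsk hs hp
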